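/- Let ℓ ≥ 1 and 0 ≤ r ≤ ℓ. Let M ∈ ℂ^{ℓ×ℓ} be a matrix of rank at most r, and suppose the associated polynomial h(x,y) = Σ_{0≤i,j<ℓ} M_{ij} x^i y^j ∈ ℂ[x,y] is divisible by (x − y)^r. Then M = 0. -/

import Mathlib

open Matrix
open scoped ComplexOrder

/-- Frobenius norm of a real matrix: `‖A‖ = √(trace (A Aᵀ))`. -/
noncomputable def frobR {n l : ℕ} (A : Matrix (Fin n) (Fin l) ℝ) : ℝ :=
  Real.sqrt (Matrix.trace (A * Aᵀ))

/-- Frobenius norm of a complex matrix: `‖A‖ = √(trace (A Aᴴ))`. -/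
noncomputable def frobC {n l : ℕ} (A : Matrix (Fin n) (Fin l) ℂ) : ℝ :=
  Real.sqrt (Matrix.trace (A * Aᴴ)).re

open Classical in
/-- The unique positive semidefinite square root of a positive semidefinite real
symmetric matrix (junk value `0` if `M` is not positive semidefinite). -/
noncomputable def matSqrtR {k : ℕ} (M : Matrix (Fin k) (Fin k) ℝ) : Matrix (Fin k) (Fin k) ℝ :=
  if h : M.PosSemidef then
    (h.1.eigenvectorUnitary : Matrix (Fin k) (Fin k) ℝ) *
      Matrix.diagonal ((RCLike.ofReal : ℝ → ℝ) ∘ Real.sqrt ∘ h.1.eigenvalues) *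
      (star h.1.eigenvectorUnitary : Matrix (Fin k) (Fin k) ℝ) else 0

open Classical in
/-- The unique positive semidefinite square root of a positive semidefinite hermitian
matrix (junk value `0` if `M` is not positive semidefinite). -/
noncomputable def matSqrtC {k : ℕ} (M : Matrix (Fin k) (Fin k) ℂ) : Matrix (Fin k) (Fin k) ℂ :=
  if h : M.PosSemidef then
    (h.1.eigenvectorUnitary : Matrix (Fin k) (Fin k) ℂ) *
      Matrix.diagonal ((RCLike.ofReal : ℝ → ℂ) ∘ Real.sqrt ∘ h.1.eigenvalues) *
      (star h.1.eigenvectorUnitary : Matrix (Fin k) (Fin k) ℂ) else 0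

/-- Orbit distance for the orthogonal group `O(n)` acting by left multiplication. -/
noncomputable def dO {n l : ℕ} (A B : Matrix (Fin n) (Fin l) ℝ) : ℝ :=
  sInf {x | ∃ W ∈ Matrix.orthogonalGroup (Fin n) ℝ, x = frobR (W * A - B)}

/-- Orbit distance for the unitary group `U(n)` acting by left multiplication. -/
noncomputable def dU {n l : ℕ} (A B : Matrix (Fin n) (Fin l) ℂ) : ℝ :=
  sInf {x | ∃ W ∈ Matrix.unitaryGroup (Fin n) ℂ, x = frobC (W * A - B)}

/-- `q𝟙ᵀ` : the `n × l` matrix each of whose columns equals `q` (real case). -/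
def colMatR {n l : ℕ} (q : Fin n → ℝ) : Matrix (Fin n) (Fin l) ℝ :=
  Matrix.of fun i _ => q i

/-- `q𝟙ᵀ` : the `n × l` matrix each of whose columns equals `q` (complex case). -/
def colMatC {n l : ℕ} (q : Fin n → ℂ) : Matrix (Fin n) (Fin l) ℂ :=
  Matrix.of fun i _ => q i

/-- Orbit distance for the euclidean group `E(n) = O(n) ⋉ ℝⁿ` acting columnwise. -/
noncomputable def dE {n l : ℕ} (A B : Matrix (Fin n) (Fin l) ℝ) : ℝ :=
  sInf {x | ∃ P ∈ Matrix.orthogonalGroup (Fin n) ℝ, ∃ q : Fin n → ℝ,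
    x = frobR (P * A + colMatR q - B)}

/-- Orbit distance for the complex euclidean group `F(n) = U(n) ⋉ ℂⁿ` acting columnwise. -/
noncomputable def dF {n l : ℕ} (A B : Matrix (Fin n) (Fin l) ℂ) : ℝ :=
  sInf {x | ∃ P ∈ Matrix.unitaryGroup (Fin n) ℂ, ∃ q : Fin n → ℂ,
    x = frobC (P * A + colMatC q - B)}

/-- Column-centering `π` : subtract from each column the average of all columns (real case). -/
noncomputable def centerR {n l : ℕ} (A : Matrix (Fin n) (Fin l) ℝ) : Matrix (Fin n) (Fin l) ℝ :=
  Matrix.of fun i j => A i j - (∑ k, A i k) / (l : ℝ)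

/-- Column-centering `π_ℂ` : subtract from each column the average of all columns (complex case). -/
noncomputable def centerC {n l : ℕ} (A : Matrix (Fin n) (Fin l) ℂ) : Matrix (Fin n) (Fin l) ℂ :=
  Matrix.of fun i j => A i j - (∑ k, A i k) / (l : ℂ)

/-!
Write `h(x, y) = ∑_{k < s} f_k(x) g_k(y)` with `g_0, …, g_{s-1}` linearly independent and
`s = rank M ≤ r`, and induct on `s`. The operator `h ↦ g_0(y) ∂_y h - g_0'(y) h` lowers the power
of `x - y` dividing `h` by at most one, kills the term `k = 0` and replaces each `g_k` by the
Wronskian `W(g_0, g_k)`. These Wronskians are still linearly independent, because in characteristic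
zero `W(g_0, q) = 0` forces `q ∈ ℂ g_0`. By induction `f_k = 0` for `k ≥ 1`, and then
`x - y ∣ f_0(x) g_0(y)` gives `f_0 g_0 = 0` on the diagonal.
-/

section

open Polynomial
open MvPolynomial (pderiv)

variable {K : Type*} [Field K]

theorem Polynomial.mem_span_singleton_of_wronskian_eq_zero [CharZero K] {p q : K[X]}
    (hp : p ≠ 0) (hw : wronskian p q = 0) : q ∈ K ∙ p := by
  obtain ⟨a, b, d, hab, rfl, rfl⟩ := UniqueFactorizationMonoid.exists_reduced_factors p hp q
  have hd : d ≠ 0 := left_ne_zero_of_mul hp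
  have hw' : wronskian a b = 0 := by
    have : d ^ 2 * wronskian a b = 0 := by
      rw [← hw]
      simp only [wronskian, derivative_mul]
      ring
    exact (mul_eq_zero.mp this).resolve_left (pow_ne_zero 2 hd)
  obtain ⟨ha', hb'⟩ := hab.isCoprime.wronskian_eq_zero_iff.mp hw'
  rw [eq_C_of_derivative_eq_zero ha'] at hp ⊢
  rw [eq_C_of_derivative_eq_zero hb']
  have ha0 : a.coeff 0 ≠ 0 := fun h => hp (by rw [h, C_0, mul_zero])
  refine Submodule.mem_span_singleton.mpr ⟨b.coeff 0 / a.coeff 0, ?_⟩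
  rw [smul_eq_C_mul, mul_left_comm, ← C_mul, div_mul_cancel₀ _ ha0]

theorem Derivation.pow_dvd_of_pow_succ_dvd {R A : Type*} [CommSemiring R] [CommRing A]
    [Algebra R A] (D : Derivation R A A) {p a : A} {n : ℕ} (h : p ^ (n + 1) ∣ a) :
    p ^ n ∣ D a := by
  obtain ⟨c, rfl⟩ := h
  rw [D.leibniz, D.leibniz_pow, Nat.add_sub_cancel, smul_eq_mul, smul_eq_mul, nsmul_eq_mul,
    smul_eq_mul]
  exact ⟨p * D c + c * ((n + 1 : ℕ) * D p), by ring⟩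

theorem Matrix.exists_rank_factorization {m n : Type*} [Finite m] [Fintype n] (M : Matrix m n K) :
    ∃ (A : Matrix m (Fin M.rank) K) (B : Matrix (Fin M.rank) n K),
      LinearIndependent K B.row ∧ A * B = M := by
  let V := Submodule.span K (Set.range M.row)
  let b := Module.finBasisOfFinrankEq K V M.rank_eq_finrank_span_row.symm
  let row (i : m) : V := ⟨M i, Submodule.subset_span ⟨i, rfl⟩⟩
  refine ⟨Matrix.of fun i k => b.repr (row i) k, Matrix.of fun k => (b k : n → K),
    b.linearIndependent.map' V.subtype V.ker_subtype, ?_⟩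
  ext i j
  have h := congrArg (fun v : V => (v : n → K) j) (b.sum_repr (row i))
  simp only [Submodule.coe_sum, Submodule.coe_smul, Finset.sum_apply, Pi.smul_apply,
    smul_eq_mul] at h
  simpa [Matrix.mul_apply] using h

noncomputable def outerSum {s : ℕ} (f g : Fin s → K[X]) : MvPolynomial (Fin 2) K :=
  ∑ k, aeval (MvPolynomial.X 0) (f k) * aeval (MvPolynomial.X 1) (g k)

theorem outerSum_wronskian {s : ℕ} (f g : Fin s → K[X]) (p : K[X]) :
    aeval (MvPolynomial.X 1) p * pderiv 1 (outerSum f g) -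
        aeval (MvPolynomial.X 1) (derivative p) * outerSum f g =
      outerSum f fun k => wronskian p (g k) := by
  simp only [outerSum, map_sum, Derivation.leibniz, Derivation.map_aeval,
    MvPolynomial.pderiv_X_self, MvPolynomial.pderiv_X_of_ne (by decide : (0 : Fin 2) ≠ 1),
    smul_eq_mul, mul_zero, mul_one, add_zero, wronskian, map_sub, map_mul, Finset.mul_sum,
    ← Finset.sum_sub_distrib]
  exact Finset.sum_congr rfl fun _ _ => by ring

theorem sum_mul_eq_zero_of_sub_dvd_outerSum {s : ℕ} {f g : Fin s → K[X]}
    (h : MvPolynomial.X 0 - MvPolynomial.X 1 ∣ outerSum f g) : ∑ k, f k * g k = 0 := by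
  have := map_dvd (MvPolynomial.aeval fun _ => (X : K[X])) h
  simpa [outerSum, ← aeval_algHom_apply] using this

theorem eq_zero_of_sub_pow_dvd_outerSum [CharZero K] :
    ∀ {s : ℕ} (f g : Fin s → K[X]), LinearIndependent K g →
      (MvPolynomial.X 0 - MvPolynomial.X 1) ^ s ∣ outerSum f g → f = 0
  | 0, f, _, _, _ => Subsingleton.elim _ _
  | s + 1, f, g, hg, hdvd => by
    obtain ⟨hg_tail, hg0⟩ := linearIndependent_finSucc.mp hg
    have hp : g 0 ≠ 0 := hg.ne_zero 0
    have hW : LinearIndependent K fun k => wronskian (g 0) (Fin.tail g k) :=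
      hg_tail.map (f := wronskianBilin K (g 0)) <|
        (Submodule.disjoint_span_singleton_of_notMem hg0).mono_right fun q hq =>
          mem_span_singleton_of_wronskian_eq_zero hp hq
    have htail : Fin.tail f = 0 := by
      refine eq_zero_of_sub_pow_dvd_outerSum _ _ hW ?_
      have hsplit : outerSum (Fin.tail f) (fun k => wronskian (g 0) (Fin.tail g k)) =
          outerSum f fun k => wronskian (g 0) (g k) := by
        simp [outerSum, Fin.sum_univ_succ, wronskian_self_eq_zero, Fin.tail]
      rw [hsplit, ← outerSum_wronskian]
      have hD : (MvPolynomial.X 0 - MvPolynomial.X 1) ^ s ∣ pderiv (1 : Fin 2) (outerSum f g) :=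
        Derivation.pow_dvd_of_pow_succ_dvd _ hdvd
      exact dvd_sub (dvd_mul_of_dvd_right hD _)
        (dvd_mul_of_dvd_right ((pow_dvd_pow _ s.le_succ).trans hdvd) _)
    have hsucc (k : Fin s) : f k.succ = 0 := congrFun htail k
    have h0 : f 0 = 0 := by
      have := sum_mul_eq_zero_of_sub_dvd_outerSum ((dvd_pow_self _ s.succ_ne_zero).trans hdvd)
      simpa [Fin.sum_univ_succ, hsucc, hp] using this
    exact funext fun k => Fin.cases h0 hsucc k

theorem outerSum_ofFn [DecidableEq K] {m n s : ℕ} (A : Matrix (Fin m) (Fin s) K)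
    (B : Matrix (Fin s) (Fin n) K) :
    outerSum (fun k => ofFn m (Aᵀ k)) (fun k => ofFn n (B.row k)) =
      ∑ i : Fin m, ∑ j : Fin n, MvPolynomial.C ((A * B) i j) *
        MvPolynomial.X (0 : Fin 2) ^ (i : ℕ) * MvPolynomial.X (1 : Fin 2) ^ (j : ℕ) := by
  simp only [outerSum, ofFn_eq_sum_monomial, map_sum, aeval_monomial, MvPolynomial.algebraMap_eq,
    Matrix.mul_apply, Finset.sum_mul]
  rw [Finset.sum_comm]
  refine Finset.sum_congr rfl fun i _ => ?_
  rw [Finset.sum_comm]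
  refine Finset.sum_congr rfl fun k _ => ?_
  rw [Finset.mul_sum]
  refine Finset.sum_congr rfl fun j _ => ?_
  simp only [map_mul, transpose_apply, row_apply]
  ring

end

theorem stmt17_general (l r : ℕ)
    (M : Matrix (Fin l) (Fin l) ℂ) (hrank : M.rank ≤ r)
    (hdvd : (MvPolynomial.X 0 - MvPolynomial.X 1) ^ r ∣
      ∑ i : Fin l, ∑ j : Fin l,
        MvPolynomial.C (M i j) * MvPolynomial.X (0 : Fin 2) ^ (i : ℕ) *
          MvPolynomial.X (1 : Fin 2) ^ (j : ℕ)) :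
    M = 0 := by
  obtain ⟨A, B, hB, hAB⟩ := M.exists_rank_factorization
  rw [← hAB, ← outerSum_ofFn] at hdvd
  have hg : LinearIndependent ℂ fun k => Polynomial.ofFn l (B.row k) :=
    hB.map' _ (LinearMap.ker_eq_bot.mpr (Polynomial.injective_ofFn l))
  have hf := eq_zero_of_sub_pow_dvd_outerSum _ _ hg ((pow_dvd_pow _ hrank).trans hdvd)
  have hA : A = 0 := by
    ext i k
    simpa using congrArg (fun f => (f k).coeff i) hf
  rw [← hAB, hA, Matrix.zero_mul]

/-- Proposition: if `M ∈ ℂ^{ℓ×ℓ}` has rank `≤ r` and its associated polynomial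
`h(x,y) = Σ M_{ij} xⁱ yʲ` is divisible by `(x − y)^r`, then `M = 0`. -/
theorem stmt17 (l r : ℕ) (hl : 1 ≤ l) (hr : r ≤ l)
    (M : Matrix (Fin l) (Fin l) ℂ) (hrank : M.rank ≤ r)
    (hdvd : (MvPolynomial.X 0 - MvPolynomial.X 1) ^ r ∣
      ∑ i : Fin l, ∑ j : Fin l,
        MvPolynomial.C (M i j) * MvPolynomial.X (0 : Fin 2) ^ (i : ℕ) *
          MvPolynomial.X (1 : Fin 2) ^ (j : ℕ)) :
    M = 0 :=
  stmt17_general l r M hrank hdvd
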